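/- arXiv:1002.3460 — 6 statements merged into one kernel-verified Lean document; each statement's English description precedes it below -/
import Mathlib

section
/- Let m > 0 and c > 0, and let U be a locally finite Borel measure on [0,∞) satisfying the Blackwell renewal property with mean m: for every h > 0, U((t, t+h]) → h/m as t → ∞. Then e^{−c x} ∫_{[0,x]} e^{c y} U(dy) → 1/(c·m) as x → ∞. -/
/-!
Write `g x = e^{-cx} ∫_{[0,x]} e^{cy} U(dy)`. Splitting `[0, t + h]` at `t` gives
`g (t + h) = e^{-ch} g t + R`, where `e^{-ch} U((t, t+h]) ≤ R ≤ U((t, t+h])`. With `h = 1` this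
recursion keeps `g` bounded; for general `h > 0` Blackwell's property turns it into
`limsup g ≤ (h/m) / (1 - e^{-ch})` and `liminf g ≥ e^{-ch} (h/m) / (1 - e^{-ch})`, and both
bounds tend to `1/(cm)` as `h → 0`.
-/

open Filter Topology MeasureTheory Set

section ShiftRecursion

variable {g r : ℝ → ℝ} {q h ρ : ℝ}

theorem le_max_of_forall_le_mul_sub_one_add {C B a : ℝ} (hq : 0 ≤ q) (hq1 : q < 1)
    (hbase : ∀ x ≤ a, g x ≤ C) (hstep : ∀ x ≥ a, g x ≤ q * g (x - 1) + B) (x : ℝ) :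
    g x ≤ max C (B / (1 - q)) := by
  set M := max C (B / (1 - q))
  have hBM : q * M + B ≤ M := by
    have : B ≤ (1 - q) * M := (div_le_iff₀' (sub_pos.2 hq1)).1 (le_max_right _ _)
    linarith
  have key : ∀ n : ℕ, ∀ x ≤ a + n, g x ≤ M := by
    intro n
    induction n with
    | zero => exact fun x hx => (hbase x (by simpa using hx)).trans (le_max_left _ _)
    | succ n ih =>
      intro x hx
      rcases le_total x a with hxa | hxa
      · exact (hbase x hxa).trans (le_max_left _ _)
      · calc g x ≤ q * g (x - 1) + B := hstep x hxa
          _ ≤ q * M + B := by gcongr; exact ih _ (by push_cast at hx; linarith)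
          _ ≤ M := hBM
  obtain ⟨n, hn⟩ := exists_nat_ge (x - a)
  exact key n x (by linarith)

theorem limsup_le_mul_limsup_add (hq : 0 ≤ q)
    (hbdd : IsBoundedUnder (· ≤ ·) atTop g) (hcobdd : IsCoboundedUnder (· ≤ ·) atTop g)
    (hr : Tendsto r atTop (𝓝 ρ)) (hg : ∀ᶠ t in atTop, g (t + h) ≤ q * g t + r t) :
    limsup g atTop ≤ q * limsup g atTop + ρ := by
  set L := limsup g atTop
  have key : ∀ ε > 0, L ≤ q * (L + ε) + (ρ + ε) := by
    intro ε hε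
    obtain ⟨T, hT⟩ := eventually_atTop.1 <| hg.and <|
      (eventually_lt_of_limsup_lt (lt_add_of_pos_right L hε) hbdd).and
      (hr.eventually (gt_mem_nhds (lt_add_of_pos_right ρ hε)))
    refine limsup_le_of_le hcobdd (eventually_atTop.2 ⟨T + h, fun x hx => ?_⟩)
    obtain ⟨hgx, hgt, hrt⟩ := hT (x - h) (by linarith)
    rw [sub_add_cancel] at hgx
    calc g x ≤ q * g (x - h) + r (x - h) := hgx
      _ ≤ q * (L + ε) + (ρ + ε) := by gcongr
  have hlim : Tendsto (fun ε => q * (L + ε) + (ρ + ε)) (𝓝[>] 0) (𝓝 (q * L + ρ)) := by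
    have : Continuous (fun ε => q * (L + ε) + (ρ + ε)) := by fun_prop
    simpa using (this.tendsto 0).mono_left nhdsWithin_le_nhds
  exact ge_of_tendsto hlim (eventually_nhdsWithin_of_forall key)

theorem mul_liminf_add_le_liminf (hq : 0 ≤ q)
    (hbdd : IsBoundedUnder (· ≥ ·) atTop g) (hcobdd : IsCoboundedUnder (· ≥ ·) atTop g)
    (hr : Tendsto r atTop (𝓝 ρ)) (hg : ∀ᶠ t in atTop, q * g t + r t ≤ g (t + h)) :
    q * liminf g atTop + ρ ≤ liminf g atTop := by
  set L := liminf g atTop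
  have key : ∀ ε > 0, q * (L - ε) + (ρ - ε) ≤ L := by
    intro ε hε
    obtain ⟨T, hT⟩ := eventually_atTop.1 <| hg.and <|
      (eventually_lt_of_lt_liminf (sub_lt_self L hε) hbdd).and
      (hr.eventually (lt_mem_nhds (sub_lt_self ρ hε)))
    refine le_liminf_of_le hcobdd (eventually_atTop.2 ⟨T + h, fun x hx => ?_⟩)
    obtain ⟨hgx, hgt, hrt⟩ := hT (x - h) (by linarith)
    rw [sub_add_cancel] at hgx
    calc q * (L - ε) + (ρ - ε) ≤ q * g (x - h) + r (x - h) := by gcongr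
      _ ≤ g x := hgx
  have hlim : Tendsto (fun ε => q * (L - ε) + (ρ - ε)) (𝓝[>] 0) (𝓝 (q * L + ρ)) := by
    have : Continuous (fun ε => q * (L - ε) + (ρ - ε)) := by fun_prop
    simpa using (this.tendsto 0).mono_left nhdsWithin_le_nhds
  exact le_of_tendsto hlim (eventually_nhdsWithin_of_forall key)

end ShiftRecursion

theorem tendsto_div_one_sub_exp_neg_mul {c : ℝ} (hc : c ≠ 0) :
    Tendsto (fun h => h / (1 - Real.exp (-(c * h)))) (𝓝[≠] 0) (𝓝 c⁻¹) := by
  have hd : HasDerivAt (fun h => 1 - Real.exp (-(c * h))) c 0 := by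
    simpa using ((hasDerivAt_id (0 : ℝ)).const_mul c).neg.exp.const_sub 1
  refine (hd.tendsto_slope_zero.inv₀ hc).congr fun h => ?_
  simp [div_eq_mul_inv, mul_comm]

noncomputable def discountedRenewal (c : ℝ) (U : Measure ℝ) (x : ℝ) : ℝ :=
  Real.exp (-(c * x)) * ∫ y in Icc 0 x, Real.exp (c * y) ∂U

theorem discountedRenewal_nonneg (c : ℝ) (U : Measure ℝ) (x : ℝ) :
    0 ≤ discountedRenewal c U x :=
  mul_nonneg (Real.exp_pos _).le
    (setIntegral_nonneg measurableSet_Icc fun _ _ => (Real.exp_pos _).le)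

section DiscountedRenewal

variable {c : ℝ} {U : Measure ℝ} [IsLocallyFiniteMeasure U]

theorem exp_mul_measureReal_le_setIntegral_exp {s : Set ℝ} {a b : ℝ} (hc : 0 ≤ c)
    (hs : MeasurableSet s) (hsab : s ⊆ Icc a b) :
    Real.exp (c * a) * U.real s ≤ ∫ y in s, Real.exp (c * y) ∂U :=
  setIntegral_ge_of_const_le_real hs ((measure_mono hsab).trans_lt measure_Icc_lt_top).ne
    (fun y hy => Real.exp_le_exp.2 (mul_le_mul_of_nonneg_left (hsab hy).1 hc))
    ((by fun_prop : Continuous fun y => Real.exp (c * y)).integrableOn_Icc.mono_set hsab)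

theorem setIntegral_exp_le_exp_mul_measureReal {s : Set ℝ} {a b : ℝ} (hc : 0 ≤ c)
    (hs : MeasurableSet s) (hsab : s ⊆ Icc a b) :
    ∫ y in s, Real.exp (c * y) ∂U ≤ Real.exp (c * b) * U.real s := by
  calc ∫ y in s, Real.exp (c * y) ∂U ≤ ∫ _ in s, Real.exp (c * b) ∂U :=
        setIntegral_mono_on
          ((by fun_prop : Continuous fun y => Real.exp (c * y)).integrableOn_Icc.mono_set hsab)
          (integrableOn_const ((measure_mono hsab).trans_lt measure_Icc_lt_top).ne) hs
          (fun y hy => Real.exp_le_exp.2 (mul_le_mul_of_nonneg_left (hsab hy).2 hc))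
    _ = Real.exp (c * b) * U.real s := by rw [setIntegral_const, smul_eq_mul, mul_comm]

theorem discountedRenewal_le_measureReal (hc : 0 ≤ c) (x : ℝ) :
    discountedRenewal c U x ≤ U.real (Icc 0 x) := by
  calc discountedRenewal c U x
      ≤ Real.exp (-(c * x)) * (Real.exp (c * x) * U.real (Icc 0 x)) := by
        unfold discountedRenewal
        gcongr
        exact setIntegral_exp_le_exp_mul_measureReal hc measurableSet_Icc subset_rfl
    _ = U.real (Icc 0 x) := by rw [Real.exp_neg, inv_mul_cancel_left₀ (Real.exp_pos _).ne']

theorem discountedRenewal_add (c : ℝ) {t h : ℝ} (ht : 0 ≤ t) (hh : 0 ≤ h) :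
    discountedRenewal c U (t + h) = Real.exp (-(c * h)) * discountedRenewal c U t
      + Real.exp (-(c * (t + h))) * ∫ y in Ioc t (t + h), Real.exp (c * y) ∂U := by
  have hint (s : Set ℝ) (hs : s ⊆ Icc 0 (t + h)) : IntegrableOn (fun y => Real.exp (c * y)) s U :=
    (by fun_prop : Continuous fun y => Real.exp (c * y)).integrableOn_Icc.mono_set hs
  rw [discountedRenewal, ← Icc_union_Ioc_eq_Icc ht (le_add_of_nonneg_right hh),
    setIntegral_union ((Iic_disjoint_Ioc le_rfl).mono_left Icc_subset_Iic_self) measurableSet_Ioc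
      (hint _ (Icc_subset_Icc_right (le_add_of_nonneg_right hh))) (hint _ (Ioc_subset_Icc_self.trans (Icc_subset_Icc_left ht))),
    discountedRenewal, show -(c * (t + h)) = -(c * h) + -(c * t) by ring, Real.exp_add]
  ring

theorem discountedRenewal_add_le (hc : 0 ≤ c) {t h : ℝ} (ht : 0 ≤ t) (hh : 0 ≤ h) :
    discountedRenewal c U (t + h)
      ≤ Real.exp (-(c * h)) * discountedRenewal c U t + U.real (Ioc t (t + h)) := by
  rw [discountedRenewal_add c ht hh]
  gcongr
  calc Real.exp (-(c * (t + h))) * ∫ y in Ioc t (t + h), Real.exp (c * y) ∂U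
      ≤ Real.exp (-(c * (t + h))) * (Real.exp (c * (t + h)) * U.real (Ioc t (t + h))) := by
        gcongr
        exact setIntegral_exp_le_exp_mul_measureReal hc measurableSet_Ioc Ioc_subset_Icc_self
    _ = U.real (Ioc t (t + h)) := by
        rw [Real.exp_neg, inv_mul_cancel_left₀ (Real.exp_pos _).ne']

theorem exp_mul_add_le_discountedRenewal_add (hc : 0 ≤ c) {t h : ℝ} (ht : 0 ≤ t) (hh : 0 ≤ h) :
    Real.exp (-(c * h)) * discountedRenewal c U t + Real.exp (-(c * h)) * U.real (Ioc t (t + h))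
      ≤ discountedRenewal c U (t + h) := by
  rw [discountedRenewal_add c ht hh]
  gcongr _ + ?_
  calc Real.exp (-(c * h)) * U.real (Ioc t (t + h))
      = Real.exp (-(c * (t + h))) * (Real.exp (c * t) * U.real (Ioc t (t + h))) := by
        rw [← mul_assoc, ← Real.exp_add]; ring_nf
    _ ≤ Real.exp (-(c * (t + h))) * ∫ y in Ioc t (t + h), Real.exp (c * y) ∂U := by
        gcongr
        exact exp_mul_measureReal_le_setIntegral_exp hc measurableSet_Ioc Ioc_subset_Icc_self

theorem isBoundedUnder_le_discountedRenewal (hc : 0 < c)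
    (hU : IsBoundedUnder (· ≤ ·) atTop fun t => U.real (Ioc t (t + 1))) :
    IsBoundedUnder (· ≤ ·) atTop (discountedRenewal c U) := by
  obtain ⟨B, hB⟩ := hU.eventually_le
  obtain ⟨a, ha⟩ := (hB.and (eventually_ge_atTop 0)).exists_forall_of_atTop
  have hbase (x : ℝ) (hx : x ≤ a + 1) : discountedRenewal c U x ≤ U.real (Icc 0 (a + 1)) :=
    (discountedRenewal_le_measureReal hc.le x).trans
      (measureReal_mono (Icc_subset_Icc_right hx) measure_Icc_lt_top.ne)
  have hstep (x : ℝ) (hx : x ≥ a + 1) :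
      discountedRenewal c U x ≤ Real.exp (-(c * 1)) * discountedRenewal c U (x - 1) + B := by
    obtain ⟨hBx, hx0⟩ := ha (x - 1) (by linarith)
    have := discountedRenewal_add_le (U := U) hc.le hx0 zero_le_one
    rw [sub_add_cancel] at this hBx
    linarith
  exact isBoundedUnder_of ⟨_, le_max_of_forall_le_mul_sub_one_add (Real.exp_pos _).le
    (Real.exp_lt_one_iff.2 (by linarith)) hbase hstep⟩

theorem limsup_discountedRenewal_le (hc : 0 < c)
    (hbdd : IsBoundedUnder (· ≤ ·) atTop (discountedRenewal c U)) {h ρ : ℝ} (hh : 0 < h)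
    (hU : Tendsto (fun t => U.real (Ioc t (t + h))) atTop (𝓝 ρ)) :
    limsup (discountedRenewal c U) atTop ≤ ρ / (1 - Real.exp (-(c * h))) := by
  have hq1 : Real.exp (-(c * h)) < 1 := Real.exp_lt_one_iff.2 (by nlinarith)
  have := limsup_le_mul_limsup_add (Real.exp_pos _).le hbdd
    (isBoundedUnder_of ⟨0, discountedRenewal_nonneg c U⟩).isCoboundedUnder_le hU
    (by filter_upwards [eventually_ge_atTop 0] with t ht
        using discountedRenewal_add_le hc.le ht hh.le)
  rw [le_div_iff₀ (sub_pos.2 hq1)]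
  linarith

theorem le_liminf_discountedRenewal (hc : 0 < c)
    (hbdd : IsBoundedUnder (· ≤ ·) atTop (discountedRenewal c U)) {h ρ : ℝ} (hh : 0 < h)
    (hU : Tendsto (fun t => U.real (Ioc t (t + h))) atTop (𝓝 ρ)) :
    Real.exp (-(c * h)) * ρ / (1 - Real.exp (-(c * h))) ≤ liminf (discountedRenewal c U) atTop := by
  have hq1 : Real.exp (-(c * h)) < 1 := Real.exp_lt_one_iff.2 (by nlinarith)
  have := mul_liminf_add_le_liminf (Real.exp_pos _).le
    (isBoundedUnder_of ⟨0, discountedRenewal_nonneg c U⟩) hbdd.isCoboundedUnder_ge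
    (hU.const_mul (Real.exp (-(c * h))))
    (by filter_upwards [eventually_ge_atTop 0] with t ht
        using exp_mul_add_le_discountedRenewal_add hc.le ht hh.le)
  rw [div_le_iff₀ (sub_pos.2 hq1)]
  linarith

end DiscountedRenewal

theorem blackwell_exponential_renewal_limit_general
    (m c : ℝ) (hc : 0 < c)
    (U : Measure ℝ) [IsLocallyFiniteMeasure U]
    (hBlackwell : ∀ h : ℝ, 0 < h →
      Tendsto (fun t : ℝ => (U (Set.Ioc t (t + h))).toReal) atTop (𝓝 (h / m))) :
    Tendsto (fun x : ℝ => Real.exp (-(c * x)) * ∫ y in Set.Icc 0 x, Real.exp (c * y) ∂U)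
      atTop (𝓝 (1 / (c * m))) := by
  change Tendsto (discountedRenewal c U) atTop _
  have hbdd := isBoundedUnder_le_discountedRenewal hc (hBlackwell 1 one_pos).isBoundedUnder_le
  have hφ : Tendsto (fun h => h / (1 - Real.exp (-(c * h))) / m) (𝓝[>] 0)
      (𝓝 (1 / (c * m))) := by
    convert ((tendsto_div_one_sub_exp_neg_mul hc.ne').mono_left (nhdsGT_le_nhdsNE 0)).div_const m
      using 2
    ring
  have hexp : Tendsto (fun h => Real.exp (-(c * h))) (𝓝[>] 0) (𝓝 1) := by
    simpa using ((by fun_prop : Continuous fun h => Real.exp (-(c * h))).tendsto 0).mono_left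
      nhdsWithin_le_nhds
  refine tendsto_of_le_liminf_of_limsup_le ?_ ?_ hbdd
    (isBoundedUnder_of ⟨0, discountedRenewal_nonneg c U⟩)
  · refine le_of_tendsto (by simpa using hexp.mul hφ) ?_
    filter_upwards [self_mem_nhdsWithin] with h hh
    exact le_of_eq_of_le (by ring) (le_liminf_discountedRenewal hc hbdd hh (hBlackwell h hh))
  · refine ge_of_tendsto hφ ?_
    filter_upwards [self_mem_nhdsWithin] with h hh
    exact (limsup_discountedRenewal_le hc hbdd hh (hBlackwell h hh)).trans_eq (by ring)

/-- Let `m > 0` and `c > 0`, and let `U` be a locally finite Borel measure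
on `[0,∞)` (i.e. a measure on `ℝ` giving no mass to `(-∞,0)`) satisfying the Blackwell
renewal property with mean `m`: for every `h > 0`, `U((t, t+h]) → h/m` as `t → ∞`.
Then `e^{-c x} ∫_{[0,x]} e^{c y} U(dy) → 1/(c·m)` as `x → ∞`. -/
theorem blackwell_exponential_renewal_limit
    (m c : ℝ) (hm : 0 < m) (hc : 0 < c)
    (U : Measure ℝ) [IsLocallyFiniteMeasure U]
    (hU0 : U (Set.Iio 0) = 0)
    (hBlackwell : ∀ h : ℝ, 0 < h →
      Tendsto (fun t : ℝ => (U (Set.Ioc t (t + h))).toReal) atTop (𝓝 (h / m))) :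
    Tendsto (fun x : ℝ => Real.exp (-(c * x)) * ∫ y in Set.Icc 0 x, Real.exp (c * y) ∂U)
      atTop (𝓝 (1 / (c * m))) :=
  blackwell_exponential_renewal_limit_general m c hc U hBlackwell
end

section
/- Let ρ, ρ̂ ∈ (0,1), C, Ĉ > 0 and α, β, α̂, β̂ ∈ ℝ. Let U, Û be locally finite Borel measures on [0,∞) and L, L̂ be slowly varying at 0⁺ with U([0,x])/(x^ρ L(x)) → 1 and Û([0,x])/(x^{ρ̂} L̂(x)) → 1 as x → 0⁺. Define Ψ(x) := C ∫_{[0,x]} e^{(α−β)y} U(dy) and Ψ̂(x) := Ĉ ∫_{[0,x]} e^{(α̂−β̂)y} Û(dy), and set Q⁺ := limsup_{x→0⁺} x^{ρ−ρ̂} L(x)/L̂(x) and Q⁻ := liminf_{x→0⁺} x^{ρ−ρ̂} L(x)/L̂(x) (values in [0,∞]). Then, in the extended reals, C·Q⁻ − Ĉ ≤ liminf_{x→0⁺} (Ψ(x) − Ψ̂(x))/(x^{ρ̂} L̂(x)) ≤ limsup_{x→0⁺} (Ψ(x) − Ψ̂(x))/(x^{ρ̂} L̂(x)) ≤ C·Q⁺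 − Ĉ. -/
/-!
Since `e^{cy} → 1` as `y → 0`, `∫_{[0,x]} e^{cy} U(dy) ∼ U([0,x]) ∼ x^ρ L(x)`, so
`Ψ(x)/(x^ρ L(x)) → C` and likewise `Ψ̂(x)/(x^ρ̂ L̂(x)) → Ĉ`. Writing
`(Ψ − Ψ̂)/(x^ρ̂ L̂) = u·v + w` with `u = Ψ/(x^ρ L) → C > 0`, `v = x^{ρ−ρ̂} L/L̂ ≥ 0` and
`w = −Ψ̂/(x^ρ̂ L̂) → −Ĉ`, the bounds are `limsup (u·v + w) ≤ lim u · limsup v + lim w` and its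
liminf counterpart in `EReal`.
-/

open Filter Topology MeasureTheory Set

/-- A function `L : (0,∞) → (0,∞)` is slowly varying at `0⁺` if for every `l > 0`,
`L(l·x)/L(x) → 1` as `x → 0⁺`. -/
def SlowlyVaryingAtZero (L : ℝ → ℝ) : Prop :=
  ∀ l : ℝ, 0 < l → Tendsto (fun x : ℝ => L (l * x) / L x) (𝓝[>] 0) (𝓝 1)

open Asymptotics

lemma isLittleO_setIntegral_Icc_sub_measureReal_smul {E : Type*} [NormedAddCommGroup E]
    [NormedSpace ℝ E] [CompleteSpace E] (μ : Measure ℝ) [IsLocallyFiniteMeasure μ] {f : ℝ → E}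
    (hf : Continuous f) (a : ℝ) :
    (fun x => ∫ y in Icc a x, f y ∂μ - μ.real (Icc a x) • f a) =o[𝓝 a]
      fun x => μ.real (Icc a x) := by
  refine isLittleO_iff.2 fun ε hε => ?_
  obtain ⟨δ, hδ, hfδ⟩ := Metric.continuous_iff.1 hf a ε hε
  filter_upwards [Metric.ball_mem_nhds a hδ] with x hx
  have hfin : μ (Icc a x) < ⊤ := isCompact_Icc.measure_lt_top
  have hclose : ∀ y ∈ Icc a x, ‖f y - f a‖ ≤ ε := fun y hy => by
    have hya : dist a y ≤ dist a x := Real.dist_left_le_of_mem_uIcc (Icc_subset_uIcc hy)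
    rw [← dist_eq_norm]
    exact (hfδ y (by rw [Metric.mem_ball'] at hx; rw [dist_comm]; exact hya.trans_lt hx)).le
  rw [Real.norm_of_nonneg measureReal_nonneg, ← setIntegral_const,
    ← integral_sub (hf.continuousOn.integrableOn_compact isCompact_Icc)
      (integrableOn_const hfin.ne)]
  exact norm_setIntegral_le_of_norm_le_const hfin hclose

lemma isEquivalent_setIntegral_Icc_exp_measureReal (μ : Measure ℝ) [IsLocallyFiniteMeasure μ]
    (c : ℝ) :
    (fun x => ∫ y in Icc 0 x, Real.exp (c * y) ∂μ) ~[𝓝 0] fun x => μ.real (Icc 0 x) := by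
  simpa [IsEquivalent, Pi.sub_def] using isLittleO_setIntegral_Icc_sub_measureReal_smul μ
    (f := fun y => Real.exp (c * y)) (by fun_prop) 0

lemma tendsto_setIntegral_Icc_exp_div (μ : Measure ℝ) [IsLocallyFiniteMeasure μ] (c : ℝ)
    {D : ℝ → ℝ} (hμ : Tendsto (fun x => μ.real (Icc 0 x) / D x) (𝓝[>] 0) (𝓝 1)) :
    Tendsto (fun x => (∫ y in Icc 0 x, Real.exp (c * y) ∂μ) / D x) (𝓝[>] 0) (𝓝 1) :=
  (((isEquivalent_setIntegral_Icc_exp_measureReal μ c).mono nhdsWithin_le_nhds).div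
    IsEquivalent.refl).symm.tendsto_nhds hμ

namespace EReal

variable {α : Type*} {l : Filter α} [l.NeBot] {A B g : α → ℝ} {a b : ℝ}

lemma coe_mul_sub (x y z : ℝ) :
    ((x * y - z : ℝ) : EReal) = (x : EReal) * y + ((-z : ℝ) : EReal) := by
  simp [sub_eq_add_neg]

lemma limsup_coe_mul_sub_le (ha : 0 < a) (hA : Tendsto A l (𝓝 a)) (hB : Tendsto B l (𝓝 b))
    (hg : ∀ᶠ x in l, 0 ≤ g x) :
    limsup (fun x => ((A x * g x - B x : ℝ) : EReal)) l ≤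
      a * limsup (fun x => (g x : EReal)) l - b := by
  have hA' : limsup (fun x => (A x : EReal)) l = a := (tendsto_coe.2 hA).limsup_eq
  have hB' : limsup (fun x => ((-B x : ℝ) : EReal)) l = (-b : ℝ) :=
    (tendsto_coe.2 hB.neg).limsup_eq
  simp_rw [coe_mul_sub]
  calc _ ≤ limsup (fun x => (A x : EReal) * g x) l + limsup (fun x => ((-B x : ℝ) : EReal)) l :=
        limsup_add_le (.inr (hB' ▸ coe_ne_top _)) (.inr (hB' ▸ coe_ne_bot _))
    _ ≤ a * limsup (fun x => (g x : EReal)) l + ((-b : ℝ) : EReal) := by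
        rw [hB', ← hA']
        gcongr
        have hApos : ∀ᶠ x in l, (0 : EReal) ≤ A x :=
          (hA.eventually_const_le ha).mono fun _ => EReal.coe_nonneg.2
        refine limsup_mul_le (u := fun x => (A x : EReal)) hApos.frequently
          (hg.mono fun _ => EReal.coe_nonneg.2) (.inl ?_) (.inl ?_)
        · rw [hA']; exact_mod_cast ha.ne'
        · rw [hA']; exact coe_ne_top a
    _ = _ := by rw [coe_neg, sub_eq_add_neg]

lemma le_liminf_coe_mul_sub (ha : 0 < a) (hA : Tendsto A l (𝓝 a)) (hB : Tendsto B l (𝓝 b))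
    (hg : ∀ᶠ x in l, 0 ≤ g x) :
    a * liminf (fun x => (g x : EReal)) l - b ≤
      liminf (fun x => ((A x * g x - B x : ℝ) : EReal)) l := by
  have hA' : liminf (fun x => (A x : EReal)) l = a := (tendsto_coe.2 hA).liminf_eq
  have hB' : liminf (fun x => ((-B x : ℝ) : EReal)) l = (-b : ℝ) :=
    (tendsto_coe.2 hB.neg).liminf_eq
  simp_rw [coe_mul_sub]
  calc _ = liminf (fun x => (A x : EReal)) l * liminf (fun x => (g x : EReal)) l
        + liminf (fun x => ((-B x : ℝ) : EReal)) l := by rw [hA', hB', coe_neg, sub_eq_add_neg]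
    _ ≤ liminf (fun x => (A x : EReal) * g x) l + liminf (fun x => ((-B x : ℝ) : EReal)) l := by
        gcongr
        exact le_liminf_mul ((hA.eventually_const_le ha).mono fun _ => EReal.coe_nonneg.2)
          (hg.mono fun _ => EReal.coe_nonneg.2)
    _ ≤ _ := le_liminf_add

end EReal

theorem liminf_limsup_Psi_diff_bounds_general
    (rho rhoh : ℝ)
    (C Ch : ℝ) (hC : 0 < C)
    (alpha beta alphah betah : ℝ)
    (U Uh : Measure ℝ) [IsLocallyFiniteMeasure U] [IsLocallyFiniteMeasure Uh]
    (L Lh : ℝ → ℝ)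
    (hLpos : ∀ x : ℝ, 0 < x → 0 < L x) (hLhpos : ∀ x : ℝ, 0 < x → 0 < Lh x)
    (hU : Tendsto (fun x : ℝ => (U (Set.Icc 0 x)).toReal / (x ^ rho * L x))
      (𝓝[>] 0) (𝓝 1))
    (hUh : Tendsto (fun x : ℝ => (Uh (Set.Icc 0 x)).toReal / (x ^ rhoh * Lh x))
      (𝓝[>] 0) (𝓝 1))
    (Psi Psih : ℝ → ℝ)
    (hPsi : ∀ x : ℝ, Psi x = C * ∫ y in Set.Icc 0 x, Real.exp ((alpha - beta) * y) ∂U)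
    (hPsih : ∀ x : ℝ,
      Psih x = Ch * ∫ y in Set.Icc 0 x, Real.exp ((alphah - betah) * y) ∂Uh)
    (Qp Qm : EReal)
    (hQp : Qp = Filter.limsup
      (fun x : ℝ => ((x ^ (rho - rhoh) * L x / Lh x : ℝ) : EReal)) (𝓝[>] 0))
    (hQm : Qm = Filter.liminf
      (fun x : ℝ => ((x ^ (rho - rhoh) * L x / Lh x : ℝ) : EReal)) (𝓝[>] 0)) :
    (C : EReal) * Qm - (Ch : EReal) ≤
        Filter.liminf
          (fun x : ℝ => (((Psi x - Psih x) / (x ^ rhoh * Lh x) : ℝ) : EReal)) (𝓝[>] 0) ∧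
      Filter.liminf
          (fun x : ℝ => (((Psi x - Psih x) / (x ^ rhoh * Lh x) : ℝ) : EReal)) (𝓝[>] 0) ≤
        Filter.limsup
          (fun x : ℝ => (((Psi x - Psih x) / (x ^ rhoh * Lh x) : ℝ) : EReal)) (𝓝[>] 0) ∧
      Filter.limsup
          (fun x : ℝ => (((Psi x - Psih x) / (x ^ rhoh * Lh x) : ℝ) : EReal)) (𝓝[>] 0) ≤
        (C : EReal) * Qp - (Ch : EReal) := by
  have hA : Tendsto (fun x => Psi x / (x ^ rho * L x)) (𝓝[>] 0) (𝓝 C) := by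
    simpa [hPsi, mul_div_assoc] using
      (tendsto_setIntegral_Icc_exp_div U (alpha - beta) hU).const_mul C
  have hB : Tendsto (fun x => Psih x / (x ^ rhoh * Lh x)) (𝓝[>] 0) (𝓝 Ch) := by
    simpa [hPsih, mul_div_assoc] using
      (tendsto_setIntegral_Icc_exp_div Uh (alphah - betah) hUh).const_mul Ch
  have hQ : ∀ᶠ x in 𝓝[>] (0:ℝ), 0 ≤ x ^ (rho - rhoh) * L x / Lh x :=
    eventually_mem_nhdsWithin.mono fun x hx =>
      div_nonneg (mul_nonneg (Real.rpow_nonneg hx.out.le _) (hLpos x hx).le) (hLhpos x hx).le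
  have hsplit : ∀ᶠ x in 𝓝[>] (0:ℝ),
      (((Psi x - Psih x) / (x ^ rhoh * Lh x) : ℝ) : EReal) =
        ((Psi x / (x ^ rho * L x) * (x ^ (rho - rhoh) * L x / Lh x)
          - Psih x / (x ^ rhoh * Lh x) : ℝ) : EReal) := by
    filter_upwards [self_mem_nhdsWithin] with x hx
    have := (Real.rpow_pos_of_pos hx rho).ne'
    have := (hLpos x hx).ne'
    have := (hLhpos x hx).ne'
    rw [Real.rpow_sub hx]
    field_simp
  refine ⟨?_, liminf_le_limsup, ?_⟩
  · rw [liminf_congr hsplit, hQm]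
    exact EReal.le_liminf_coe_mul_sub hC hA hB hQ
  · rw [limsup_congr hsplit, hQp]
    exact EReal.limsup_coe_mul_sub_le hC hA hB hQ

/-- Lemma 4.1 of the paper. With `Ψ(x) = C ∫_{[0,x]} e^{(α-β)y} U(dy)`,
`Ψ̂(x) = Ĉ ∫_{[0,x]} e^{(α̂-β̂)y} Û(dy)`, and Tauberian hypotheses
`U([0,x]) ∼ x^ρ L(x)`, `Û([0,x]) ∼ x^ρ̂ L̂(x)` at `0⁺`, one has, in the extended reals,
`C·Q⁻ − Ĉ ≤ liminf (Ψ−Ψ̂)/(x^ρ̂ L̂) ≤ limsup (Ψ−Ψ̂)/(x^ρ̂ L̂) ≤ C·Q⁺ − Ĉ`,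
where `Q⁺`, `Q⁻` are the limsup and liminf at `0⁺` of `x^{ρ−ρ̂} L(x)/L̂(x)`. -/
theorem liminf_limsup_Psi_diff_bounds
    (rho rhoh : ℝ) (hrho : rho ∈ Set.Ioo (0:ℝ) 1) (hrhoh : rhoh ∈ Set.Ioo (0:ℝ) 1)
    (C Ch : ℝ) (hC : 0 < C) (hCh : 0 < Ch)
    (alpha beta alphah betah : ℝ)
    (U Uh : Measure ℝ) [IsLocallyFiniteMeasure U] [IsLocallyFiniteMeasure Uh]
    (hU0 : U (Set.Iio 0) = 0) (hUh0 : Uh (Set.Iio 0) = 0)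
    (L Lh : ℝ → ℝ)
    (hLpos : ∀ x : ℝ, 0 < x → 0 < L x) (hLhpos : ∀ x : ℝ, 0 < x → 0 < Lh x)
    (hLsv : SlowlyVaryingAtZero L) (hLhsv : SlowlyVaryingAtZero Lh)
    (hU : Tendsto (fun x : ℝ => (U (Set.Icc 0 x)).toReal / (x ^ rho * L x))
      (𝓝[>] 0) (𝓝 1))
    (hUh : Tendsto (fun x : ℝ => (Uh (Set.Icc 0 x)).toReal / (x ^ rhoh * Lh x))
      (𝓝[>] 0) (𝓝 1))
    (Psi Psih : ℝ → ℝ)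
    (hPsi : ∀ x : ℝ, Psi x = C * ∫ y in Set.Icc 0 x, Real.exp ((alpha - beta) * y) ∂U)
    (hPsih : ∀ x : ℝ,
      Psih x = Ch * ∫ y in Set.Icc 0 x, Real.exp ((alphah - betah) * y) ∂Uh)
    (Qp Qm : EReal)
    (hQp : Qp = Filter.limsup
      (fun x : ℝ => ((x ^ (rho - rhoh) * L x / Lh x : ℝ) : EReal)) (𝓝[>] 0))
    (hQm : Qm = Filter.liminf
      (fun x : ℝ => ((x ^ (rho - rhoh) * L x / Lh x : ℝ) : EReal)) (𝓝[>] 0)) :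
    (C : EReal) * Qm - (Ch : EReal) ≤
        Filter.liminf
          (fun x : ℝ => (((Psi x - Psih x) / (x ^ rhoh * Lh x) : ℝ) : EReal)) (𝓝[>] 0) ∧
      Filter.liminf
          (fun x : ℝ => (((Psi x - Psih x) / (x ^ rhoh * Lh x) : ℝ) : EReal)) (𝓝[>] 0) ≤
        Filter.limsup
          (fun x : ℝ => (((Psi x - Psih x) / (x ^ rhoh * Lh x) : ℝ) : EReal)) (𝓝[>] 0) ∧
      Filter.limsup
          (fun x : ℝ => (((Psi x - Psih x) / (x ^ rhoh * Lh x) : ℝ) : EReal)) (𝓝[>] 0) ≤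
        (C : EReal) * Qp - (Ch : EReal) :=
  liminf_limsup_Psi_diff_bounds_general rho rhoh C Ch hC alpha beta alphah betah U Uh L Lh hLpos
    hLhpos hU hUh Psi Psih hPsi hPsih Qp Qm hQp hQm
end

section
/- Let ρ, ρ̂ ∈ (0,1) with ρ̂ > ρ, let C, Ĉ > 0 and α, β, α̂, β̂ ∈ ℝ. Let U, Û be locally finite Borel measures on [0,∞) and L, L̂ be slowly varying at 0⁺ with U([0,x])/(x^ρ L(x)) → 1 and Û([0,x])/(x^{ρ̂} L̂(x)) → 1 as x → 0⁺. Define Ψ(x) := C ∫_{[0,x]} e^{(α−β)y} U(dy) and Ψ̂(x) := Ĉ ∫_{[0,x]} e^{(α̂−β̂)y} Û(dy). Then (Ψ(x) − Ψ̂(x))/(x^{ρ̂} L̂(x)) → +∞ as x → 0⁺. -/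
open Filter Topology MeasureTheory Set

/-!
On `[0, 1]` the weights `exp ((α - β) y)` lie between two positive constants, so
`Ψ(x) ≥ c · U[0,x]` and `Ψ̂(x) ≤ c' · Û[0,x]`; as `Û[0,x] ~ x^ρ̂ L̂(x)`, it suffices that
`U[0,x] / Û[0,x] → ∞`. Slow variation gives `U[0,x/2] / U[0,x] → 2^(-ρ)` and
`Û[0,x/2] / Û[0,x] → 2^(-ρ̂) < 2^(-ρ)`, so the ratio `r = U[0,·] / Û[0,·]` grows geometrically
along `δ / 2^n`. Between consecutive dyadic points, monotonicity of both distribution functions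
bounds `r` below by a fixed multiple of its value at the left endpoint, so no uniform
convergence theorem for `L` or `L̂` is needed.
-/

open Asymptotics Real

lemma exists_mem_Ioc_div_two_pow {δ y : ℝ} (hy : 0 < y) (hyδ : y ≤ δ) :
    ∃ n : ℕ, y ∈ Ioc (δ / 2 ^ (n + 1)) (δ / 2 ^ n) := by
  obtain ⟨n, hn, hn1⟩ := exists_nat_pow_near ((one_le_div hy).2 hyδ) one_lt_two
  refine ⟨n, ?_, ?_⟩
  · rwa [div_lt_iff₀ (by positivity), ← div_lt_iff₀' hy]
  · rwa [le_div_iff₀ (by positivity), ← le_div_iff₀' hy]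

lemma tendsto_atTop_of_le_on_dyadic {r : ℝ → ℝ} {s : ℕ → ℝ} {δ : ℝ} (hδ : 0 < δ)
    (hs : Tendsto s atTop atTop)
    (hsr : ∀ n, ∀ y ∈ Ioc (δ / 2 ^ (n + 1)) (δ / 2 ^ n), s n ≤ r y) :
    Tendsto r (𝓝[>] 0) atTop := by
  refine tendsto_atTop.2 fun K => ?_
  obtain ⟨N, hN⟩ := eventually_atTop.1 (tendsto_atTop.1 hs K)
  filter_upwards [Ioc_mem_nhdsGT (by positivity : (0 : ℝ) < δ / 2 ^ N)] with y ⟨hy, hyN⟩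
  obtain ⟨n, hn⟩ := exists_mem_Ioc_div_two_pow hy hyN
  simp only [div_div, ← pow_add] at hn
  exact (hN (N + n) (Nat.le_add_right N n)).trans (hsr (N + n) y (by rwa [← add_assoc] at hn))

lemma pow_mul_le_apply_div_two_pow {r : ℝ → ℝ} {c δ : ℝ} (hc : 0 ≤ c) (hδ : 0 < δ)
    (hstep : ∀ x ∈ Ioc 0 δ, c * r x ≤ r (x / 2)) (n : ℕ) :
    c ^ n * r δ ≤ r (δ / 2 ^ n) := by
  induction n with
  | zero => simp
  | succ n ih =>
    have hx : δ / 2 ^ n ∈ Ioc 0 δ := ⟨by positivity, div_le_self hδ.le (one_le_pow₀ one_le_two)⟩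
    calc c ^ (n + 1) * r δ = c * (c ^ n * r δ) := by ring
      _ ≤ c * r (δ / 2 ^ n) := mul_le_mul_of_nonneg_left ih hc
      _ ≤ r (δ / 2 ^ (n + 1)) := by rw [pow_succ, ← div_div]; exact hstep _ hx

lemma tendsto_atTop_of_mul_le_apply_half {r : ℝ → ℝ} {c m δ : ℝ} (hc : 1 < c) (hm : 0 < m)
    (hδ : 0 < δ) (hrδ : 0 < r δ) (hstep : ∀ x ∈ Ioc 0 δ, c * r x ≤ r (x / 2))
    (hmid : ∀ x ∈ Ioc 0 δ, ∀ y ∈ Ioc (x / 2) x, m * r (x / 2) ≤ r y) :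
    Tendsto r (𝓝[>] 0) atTop := by
  refine tendsto_atTop_of_le_on_dyadic (s := fun n => m * (c ^ (n + 1) * r δ)) hδ ?_ ?_
  · exact (((tendsto_pow_atTop_atTop_of_one_lt hc).comp (tendsto_add_atTop_nat 1)).atTop_mul_const
      hrδ).const_mul_atTop hm
  · intro n y hy
    have hx : δ / 2 ^ n ∈ Ioc 0 δ := ⟨by positivity, div_le_self hδ.le (one_le_pow₀ one_le_two)⟩
    rw [pow_succ, ← div_div] at hy
    calc m * (c ^ (n + 1) * r δ) ≤ m * r (δ / 2 ^ n / 2) := by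
          rw [div_div, ← pow_succ]
          exact mul_le_mul_of_nonneg_left
            (pow_mul_le_apply_div_two_pow (zero_le_one.trans hc.le) hδ hstep _) hm.le
      _ ≤ r y := hmid _ hx y hy

lemma eventually_ne_zero_of_tendsto_div {α : Type*} {l : Filter α} {f g : α → ℝ} {a : ℝ}
    (ha : a ≠ 0) (h : Tendsto (fun x => f x / g x) l (𝓝 a)) :
    ∀ᶠ x in l, f x ≠ 0 ∧ g x ≠ 0 :=
  (h.eventually_ne ha).mono fun _ hx => ⟨fun h0 => hx (by simp [h0]), fun h0 => hx (by simp [h0])⟩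

theorem tendsto_div_atTop_of_tendsto_half_div {u v : ℝ → ℝ} {a b : ℝ}
    (hu : Monotone u) (hv : Monotone v) (hu0 : ∀ x, 0 ≤ u x) (hv0 : ∀ x, 0 ≤ v x)
    (hb : 0 < b) (hba : b < a)
    (hua : Tendsto (fun x => u (x / 2) / u x) (𝓝[>] 0) (𝓝 a))
    (hvb : Tendsto (fun x => v (x / 2) / v x) (𝓝[>] 0) (𝓝 b)) :
    Tendsto (fun x => u x / v x) (𝓝[>] 0) atTop := by
  set r : ℝ → ℝ := fun x => u x / v x
  obtain ⟨c, hc, hca⟩ := exists_between ((one_lt_div hb).2 hba)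
  have hr : Tendsto (fun x => r (x / 2) / r x) (𝓝[>] 0) (𝓝 (a / b)) :=
    (hua.div hvb hb.ne').congr fun x => div_div_div_comm _ _ _ _
  have hE : ∀ᶠ x in 𝓝[>] 0, (0 < u x ∧ 0 < v x) ∧ c ≤ r (x / 2) / r x ∧
      b / 2 ≤ v (x / 2) / v x :=
    (((eventually_ne_zero_of_tendsto_div (hb.trans hba).ne' hua).and
      (eventually_ne_zero_of_tendsto_div hb.ne' hvb)).mono fun x hx =>
        ⟨(hu0 x).lt_of_ne' hx.1.2, (hv0 x).lt_of_ne' hx.2.2⟩).and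
      ((hr.eventually (eventually_ge_nhds hca)).and
        (hvb.eventually (eventually_ge_nhds (half_lt_self hb))))
  obtain ⟨δ, hδ : 0 < δ, hδE⟩ := mem_nhdsGT_iff_exists_Ioc_subset.1 hE
  have hrpos : ∀ x ∈ Ioc 0 δ, 0 < r x := fun x hx => div_pos (hδE hx).1.1 (hδE hx).1.2
  have hhalf : ∀ x ∈ Ioc 0 δ, x / 2 ∈ Ioc 0 δ := fun x hx =>
    ⟨half_pos hx.1, (half_le_self hx.1.le).trans hx.2⟩
  refine tendsto_atTop_of_mul_le_apply_half hc (half_pos hb) hδ (hrpos δ ⟨hδ, le_rfl⟩)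
    (fun x hx => (le_div_iff₀ (hrpos x hx)).1 (hδE hx).2.1) fun x hx y hy => ?_
  have hvy : 0 < v y := (hδE (hhalf x hx)).1.2.trans_le (hv hy.1.le)
  calc b / 2 * r (x / 2) ≤ v (x / 2) / v x * r (x / 2) :=
        mul_le_mul_of_nonneg_right (hδE hx).2.2 (hrpos _ (hhalf x hx)).le
    _ = u (x / 2) / v x := by
        simp only [r]; field_simp [(hδE (hhalf x hx)).1.2.ne']
    _ ≤ u y / v y := div_le_div₀ (hu0 y) (hu hy.1.le) hvy (hv hy.2)

lemma SlowlyVaryingAtZero.tendsto_rpow_mul_div {L : ℝ → ℝ} (hL : SlowlyVaryingAtZero L)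
    (ρ : ℝ) {l : ℝ} (hl : 0 < l) :
    Tendsto (fun x => (l * x) ^ ρ * L (l * x) / (x ^ ρ * L x)) (𝓝[>] 0) (𝓝 (l ^ ρ)) := by
  have h := (hL l hl).const_mul (l ^ ρ)
  rw [mul_one] at h
  refine h.congr' ?_
  filter_upwards [self_mem_nhdsWithin] with x (hx : 0 < x)
  rw [mul_div_mul_comm, mul_rpow hl.le hx.le, mul_div_cancel_right₀ _ (rpow_pos_of_pos hx ρ).ne']

lemma tendsto_div_const_nhdsGT_zero {c : ℝ} (hc : 0 < c) :
    Tendsto (fun x : ℝ => x / c) (𝓝[>] 0) (𝓝[>] 0) :=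
  (tendsto_iff_comap.2 (comap_mulLeft_nhdsGT_zero (inv_pos.2 hc)).ge).congr
    fun x => inv_mul_eq_div c x

lemma Asymptotics.IsEquivalent.tendsto_comp_div {α : Type*} {l : Filter α} {u f : α → ℝ}
    {k : α → α} {a : ℝ} (h : u ~[l] f) (hk : Tendsto k l l)
    (hf : Tendsto (fun x => f (k x) / f x) l (𝓝 a)) :
    Tendsto (fun x => u (k x) / u x) l (𝓝 a) :=
  ((h.comp_tendsto hk).div h).symm.tendsto_nhds hf

lemma tendsto_half_div_of_tendsto_div_rpow_mul {u L : ℝ → ℝ} {ρ : ℝ}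
    (hL : SlowlyVaryingAtZero L) (hu : Tendsto (fun x => u x / (x ^ ρ * L x)) (𝓝[>] 0) (𝓝 1)) :
    Tendsto (fun x => u (x / 2) / u x) (𝓝[>] 0) (𝓝 (2⁻¹ ^ ρ)) :=
  (isEquivalent_of_tendsto_one hu).tendsto_comp_div (tendsto_div_const_nhdsGT_zero two_pos)
    (by simpa only [inv_mul_eq_div] using hL.tendsto_rpow_mul_div ρ (inv_pos.2 two_pos))

lemma monotone_measureReal_Icc (μ : Measure ℝ) [IsFiniteMeasureOnCompacts μ] (a : ℝ) :
    Monotone fun x => μ.real (Icc a x) :=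
  fun _ _ hxy => measureReal_mono (Icc_subset_Icc_right hxy) isCompact_Icc.measure_lt_top.ne

lemma abs_mul_le_abs_of_mem_Icc {κ x y : ℝ} (hx : x ≤ 1) (hy : y ∈ Icc 0 x) :
    |κ * y| ≤ |κ| := by
  rw [abs_mul]
  exact mul_le_of_le_one_right (abs_nonneg κ) (abs_le.2 ⟨by linarith [hy.1], hy.2.trans hx⟩)

section ExpIntegral

variable (μ : Measure ℝ) [IsFiniteMeasureOnCompacts μ] (κ : ℝ) {x : ℝ}

lemma exp_neg_abs_mul_measureReal_le_setIntegral_exp (hx : x ≤ 1) :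
    exp (-|κ|) * μ.real (Icc 0 x) ≤ ∫ y in Icc 0 x, exp (κ * y) ∂μ :=
  setIntegral_ge_of_const_le_real measurableSet_Icc isCompact_Icc.measure_lt_top.ne
    (fun _ hy => exp_le_exp.2 (neg_le_of_abs_le (abs_mul_le_abs_of_mem_Icc hx hy)))
    ((by fun_prop : Continuous fun y => exp (κ * y)).continuousOn.integrableOn_compact
      isCompact_Icc)

lemma mul_setIntegral_exp_le (C : ℝ) (hx : x ≤ 1) :
    C * ∫ y in Icc 0 x, exp (κ * y) ∂μ ≤ |C| * (exp |κ| * μ.real (Icc 0 x)) := by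
  refine (le_abs_self _).trans ?_
  rw [abs_mul, ← norm_eq_abs (∫ y in Icc 0 x, exp (κ * y) ∂μ)]
  refine mul_le_mul_of_nonneg_left ?_ (abs_nonneg C)
  refine norm_setIntegral_le_of_norm_le_const isCompact_Icc.measure_lt_top fun _ hy => ?_
  rw [norm_of_nonneg (exp_pos _).le]
  exact exp_le_exp.2 (le_of_abs_le (abs_mul_le_abs_of_mem_Icc hx hy))

end ExpIntegral

theorem Psi_diff_tendsto_atTop_of_rhoh_gt_rho_general
    (rho rhoh : ℝ)
    (hlt : rho < rhoh)
    (C Ch : ℝ) (hC : 0 < C)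
    (alpha beta alphah betah : ℝ)
    (U Uh : Measure ℝ) [IsLocallyFiniteMeasure U] [IsLocallyFiniteMeasure Uh]
    (L Lh : ℝ → ℝ)
    (hLsv : SlowlyVaryingAtZero L) (hLhsv : SlowlyVaryingAtZero Lh)
    (hU : Tendsto (fun x : ℝ => (U (Set.Icc 0 x)).toReal / (x ^ rho * L x))
      (𝓝[>] 0) (𝓝 1))
    (hUh : Tendsto (fun x : ℝ => (Uh (Set.Icc 0 x)).toReal / (x ^ rhoh * Lh x))
      (𝓝[>] 0) (𝓝 1))
    (Psi Psih : ℝ → ℝ)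
    (hPsi : ∀ x : ℝ, Psi x = C * ∫ y in Set.Icc 0 x, Real.exp ((alpha - beta) * y) ∂U)
    (hPsih : ∀ x : ℝ,
      Psih x = Ch * ∫ y in Set.Icc 0 x, Real.exp ((alphah - betah) * y) ∂Uh) :
    Tendsto (fun x : ℝ => (Psi x - Psih x) / (x ^ rhoh * Lh x)) (𝓝[>] 0) atTop := by
  set u : ℝ → ℝ := fun x => U.real (Icc 0 x)
  set v : ℝ → ℝ := fun x => Uh.real (Icc 0 x)
  have huv : Tendsto (fun x => u x / v x) (𝓝[>] 0) atTop :=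
    tendsto_div_atTop_of_tendsto_half_div (monotone_measureReal_Icc U 0)
      (monotone_measureReal_Icc Uh 0) (fun _ => measureReal_nonneg) (fun _ => measureReal_nonneg)
      (rpow_pos_of_pos (inv_pos.2 two_pos) _)
      (rpow_lt_rpow_of_exponent_gt (inv_pos.2 two_pos) (inv_lt_one_of_one_lt₀ one_lt_two) hlt)
      (tendsto_half_div_of_tendsto_div_rpow_mul (u := u) hLsv hU)
      (tendsto_half_div_of_tendsto_div_rpow_mul (u := v) hLhsv hUh)
  have hvpos : ∀ᶠ x in 𝓝[>] 0, 0 < v x :=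
    (eventually_ne_zero_of_tendsto_div one_ne_zero hUh).mono fun _ hx =>
      measureReal_nonneg.lt_of_ne' hx.1
  have hdiff : Tendsto (fun x => (Psi x - Psih x) / v x) (𝓝[>] 0) atTop := by
    refine tendsto_atTop_mono' _ ?_ <| tendsto_atTop_add_const_right _
      (-(|Ch| * exp |alphah - betah|))
      (huv.const_mul_atTop (by positivity : 0 < C * exp (-|alpha - beta|)))
    filter_upwards [hvpos, Ioc_mem_nhdsGT one_pos] with x hvx ⟨_, hx⟩
    have hΨ : C * (exp (-|alpha - beta|) * u x) ≤ C * ∫ y in Icc 0 x, exp ((alpha - beta) * y) ∂U :=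
      mul_le_mul_of_nonneg_left
        (exp_neg_abs_mul_measureReal_le_setIntegral_exp U (alpha - beta) hx) hC.le
    have hΨh := mul_setIntegral_exp_le Uh (alphah - betah) Ch hx
    rw [le_div_iff₀ hvx, hPsi, hPsih, add_mul, mul_assoc (C * _), div_mul_cancel₀ _ hvx.ne']
    linarith
  refine (hdiff.atTop_mul_pos one_pos hUh).congr' ?_
  filter_upwards [hvpos] with x hvx
  exact div_mul_div_cancel₀ hvx.ne'

/-- first limit case of Lemma 4.1 of the paper. If `ρ̂ > ρ` then
`(Ψ(x) − Ψ̂(x))/(x^ρ̂ L̂(x)) → +∞` as `x → 0⁺`. -/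
theorem Psi_diff_tendsto_atTop_of_rhoh_gt_rho
    (rho rhoh : ℝ) (hrho : rho ∈ Set.Ioo (0:ℝ) 1) (hrhoh : rhoh ∈ Set.Ioo (0:ℝ) 1)
    (hlt : rho < rhoh)
    (C Ch : ℝ) (hC : 0 < C) (hCh : 0 < Ch)
    (alpha beta alphah betah : ℝ)
    (U Uh : Measure ℝ) [IsLocallyFiniteMeasure U] [IsLocallyFiniteMeasure Uh]
    (hU0 : U (Set.Iio 0) = 0) (hUh0 : Uh (Set.Iio 0) = 0)
    (L Lh : ℝ → ℝ)
    (hLpos : ∀ x : ℝ, 0 < x → 0 < L x) (hLhpos : ∀ x : ℝ, 0 < x → 0 < Lh x)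
    (hLsv : SlowlyVaryingAtZero L) (hLhsv : SlowlyVaryingAtZero Lh)
    (hU : Tendsto (fun x : ℝ => (U (Set.Icc 0 x)).toReal / (x ^ rho * L x))
      (𝓝[>] 0) (𝓝 1))
    (hUh : Tendsto (fun x : ℝ => (Uh (Set.Icc 0 x)).toReal / (x ^ rhoh * Lh x))
      (𝓝[>] 0) (𝓝 1))
    (Psi Psih : ℝ → ℝ)
    (hPsi : ∀ x : ℝ, Psi x = C * ∫ y in Set.Icc 0 x, Real.exp ((alpha - beta) * y) ∂U)
    (hPsih : ∀ x : ℝ,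
      Psih x = Ch * ∫ y in Set.Icc 0 x, Real.exp ((alphah - betah) * y) ∂Uh) :
    Tendsto (fun x : ℝ => (Psi x - Psih x) / (x ^ rhoh * Lh x)) (𝓝[>] 0) atTop :=
  Psi_diff_tendsto_atTop_of_rhoh_gt_rho_general rho rhoh hlt C Ch hC alpha beta alphah betah U Uh L
    Lh hLsv hLhsv hU hUh Psi Psih hPsi hPsih
end

section
/- Let ρ ∈ (0,1), C, Ĉ > 0 and α, β, α̂, β̂ ∈ ℝ. Let U, Û be locally finite Borel measures on [0,∞) and L, L̂ be slowly varying at 0⁺ with U([0,x])/(x^ρ L(x)) → 1 and Û([0,x])/(x^{ρ} L̂(x)) → 1 as x → 0⁺. Define Ψ(x) := C ∫_{[0,x]} e^{(α−β)y} U(dy) and Ψ̂(x) := Ĉ ∫_{[0,x]} e^{(α̂−β̂)y} Û(dy). Assume the limit Q := lim_{x→0⁺} L(x)/L̂(x) exists in [0,∞]. Then (Ψ(x) − Ψ̂(x))/(x^{ρ} L̂(x)) → C·Q − Ĉ as x → 0⁺ (with the convention C·∞ − Ĉ = +∞). -/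
/-!
As `y → 0⁺` the weight `e^{cy}` tends to `1`, so
`∫_{[0,x]} e^{cy} U(dy) ~ U([0,x]) ~ x^ρ L(x)`. Hence
`(Ψ - Ψ̂)/(x^ρ L̂) = C (1 + o(1)) L/L̂ - Ĉ (1 + o(1))`, and multiplication by a nonzero real
and subtraction of a real are continuous on `EReal`, also at `Q = ∞`.
-/

open Filter Topology MeasureTheory Set

open Asymptotics

theorem tendsto_Icc_zero_smallSets :
    Tendsto (fun x : ℝ => Icc 0 x) (𝓝[>] 0) (𝓝 (0 : ℝ)).smallSets := by
  refine tendsto_smallSets_iff.mpr fun t ht => ?_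
  obtain ⟨ε, hε, hball⟩ := Metric.mem_nhds_iff.mp ht
  filter_upwards [Ioo_mem_nhdsGT hε] with x hx
  rw [Real.ball_eq_Ioo, zero_sub, zero_add] at hball
  exact (Icc_subset_Ioo (neg_neg_iff_pos.mpr hε) hx.2).trans hball

theorem isEquivalent_setIntegral_Icc_measureReal (U : Measure ℝ) [IsLocallyFiniteMeasure U]
    {f : ℝ → ℝ} (hf : ContinuousAt f 0) (hfm : StronglyMeasurableAtFilter f (𝓝 0) U)
    (hf0 : f 0 = 1) :
    (fun x => ∫ y in Icc 0 x, f y ∂U) ~[𝓝[>] 0] fun x => U.real (Icc 0 x) := by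
  have h := hf.integral_sub_linear_isLittleO_ae hfm tendsto_Icc_zero_smallSets
  simp only [hf0, smul_eq_mul, mul_one] at h
  exact h

theorem tendsto_setIntegral_Icc_div_of_tendsto_measureReal_div (U : Measure ℝ)
    [IsLocallyFiniteMeasure U] {f : ℝ → ℝ} (hf : ContinuousAt f 0)
    (hfm : StronglyMeasurableAtFilter f (𝓝 0) U) (hf0 : f 0 = 1) {d : ℝ → ℝ}
    (hU : Tendsto (fun x => U.real (Icc 0 x) / d x) (𝓝[>] 0) (𝓝 1)) :
    Tendsto (fun x => (∫ y in Icc 0 x, f y ∂U) / d x) (𝓝[>] 0) (𝓝 1) := by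
  have hd : ∀ᶠ x in 𝓝[>] 0, d x ≠ 0 :=
    (hU.eventually_ne one_ne_zero).mono fun x hx => (div_ne_zero_iff.mp hx).2
  exact (isEquivalent_iff_tendsto_one hd).mp <|
    (isEquivalent_setIntegral_Icc_measureReal U hf hfm hf0).trans (isEquivalent_of_tendsto_one hU)

theorem tendsto_setIntegral_Icc_exp_mul_div (c : ℝ) (U : Measure ℝ) [IsLocallyFiniteMeasure U]
    {d : ℝ → ℝ} (hU : Tendsto (fun x => (U (Icc 0 x)).toReal / d x) (𝓝[>] 0) (𝓝 1)) :
    Tendsto (fun x => (∫ y in Icc 0 x, Real.exp (c * y) ∂U) / d x) (𝓝[>] 0) (𝓝 1) :=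
  tendsto_setIntegral_Icc_div_of_tendsto_measureReal_div U (by fun_prop)
    ((by fun_prop : Continuous fun y => Real.exp (c * y)).stronglyMeasurableAtFilter U _)
    (by simp) hU

theorem EReal.tendsto_coe_mul_sub {α : Type*} {l : Filter α} {f g h : α → ℝ} {a b : ℝ}
    {q : EReal} (ha : a ≠ 0) (hf : Tendsto f l (𝓝 a))
    (hg : Tendsto (fun x => (g x : EReal)) l (𝓝 q)) (hh : Tendsto h l (𝓝 b)) :
    Tendsto (fun x => ((f x * g x - h x : ℝ) : EReal)) l (𝓝 (a * q - b)) := by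
  have ha' : (a : EReal) ≠ 0 := by exact_mod_cast ha
  have hmul := EReal.Tendsto.mul (EReal.tendsto_coe.mpr hf) hg (.inl ha') (.inl ha')
    (.inl (EReal.coe_ne_bot a)) (.inl (EReal.coe_ne_top a))
  have hneg : Tendsto (fun x => ((-h x : ℝ) : EReal)) l (𝓝 ((-b : ℝ) : EReal)) :=
    EReal.tendsto_coe.mpr hh.neg
  have hadd : ContinuousAt (fun p : EReal × EReal => p.1 + p.2) (a * q, ((-b : ℝ) : EReal)) :=
    EReal.continuousAt_add (.inr (EReal.coe_ne_bot _)) (.inr (EReal.coe_ne_top _))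
  simpa [Function.comp_def, sub_eq_add_neg] using hadd.tendsto.comp (hmul.prodMk_nhds hneg)

theorem Psi_diff_tendsto_of_ratio_limit_general
    (rho : ℝ)
    (C Ch : ℝ) (hC : 0 < C)
    (alpha beta alphah betah : ℝ)
    (U Uh : Measure ℝ) [IsLocallyFiniteMeasure U] [IsLocallyFiniteMeasure Uh]
    (L Lh : ℝ → ℝ)
    (hU : Tendsto (fun x : ℝ => (U (Set.Icc 0 x)).toReal / (x ^ rho * L x))
      (𝓝[>] 0) (𝓝 1))
    (hUh : Tendsto (fun x : ℝ => (Uh (Set.Icc 0 x)).toReal / (x ^ rho * Lh x))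
      (𝓝[>] 0) (𝓝 1))
    (Psi Psih : ℝ → ℝ)
    (hPsi : ∀ x : ℝ, Psi x = C * ∫ y in Set.Icc 0 x, Real.exp ((alpha - beta) * y) ∂U)
    (hPsih : ∀ x : ℝ,
      Psih x = Ch * ∫ y in Set.Icc 0 x, Real.exp ((alphah - betah) * y) ∂Uh)
    (Q : EReal)
    (hQ : Tendsto (fun x : ℝ => ((L x / Lh x : ℝ) : EReal)) (𝓝[>] 0) (𝓝 Q)) :
    Tendsto (fun x : ℝ => (((Psi x - Psih x) / (x ^ rho * Lh x) : ℝ) : EReal))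
      (𝓝[>] 0) (𝓝 ((C : EReal) * Q - (Ch : EReal))) := by
  have hA := tendsto_setIntegral_Icc_exp_mul_div (alpha - beta) U hU
  have hB := tendsto_setIntegral_Icc_exp_mul_div (alphah - betah) Uh hUh
  have hlim := EReal.tendsto_coe_mul_sub (by simpa using hC.ne') (hA.const_mul C) hQ
    (hB.const_mul Ch)
  simp only [mul_one] at hlim
  refine hlim.congr' ?_
  filter_upwards [hU.eventually_ne one_ne_zero, hUh.eventually_ne one_ne_zero] with x hx hxh
  obtain ⟨-, hL⟩ := mul_ne_zero_iff.mp (div_ne_zero_iff.mp hx).2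
  have hLh := (mul_ne_zero_iff.mp (div_ne_zero_iff.mp hxh).2).2
  rw [hPsi, hPsih]
  field_simp

/-- third limit case, `ρ = ρ̂`, of Lemma 4.1 of the paper. If the limit
`Q = lim_{x→0⁺} L(x)/L̂(x)` exists in `[0,∞]`, then
`(Ψ(x) − Ψ̂(x))/(x^ρ L̂(x)) → C·Q − Ĉ` as `x → 0⁺` (in the extended reals, with the
convention `C·∞ − Ĉ = +∞`). -/
theorem Psi_diff_tendsto_of_ratio_limit
    (rho : ℝ) (hrho : rho ∈ Set.Ioo (0:ℝ) 1)
    (C Ch : ℝ) (hC : 0 < C) (hCh : 0 < Ch)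
    (alpha beta alphah betah : ℝ)
    (U Uh : Measure ℝ) [IsLocallyFiniteMeasure U] [IsLocallyFiniteMeasure Uh]
    (hU0 : U (Set.Iio 0) = 0) (hUh0 : Uh (Set.Iio 0) = 0)
    (L Lh : ℝ → ℝ)
    (hLpos : ∀ x : ℝ, 0 < x → 0 < L x) (hLhpos : ∀ x : ℝ, 0 < x → 0 < Lh x)
    (hLsv : SlowlyVaryingAtZero L) (hLhsv : SlowlyVaryingAtZero Lh)
    (hU : Tendsto (fun x : ℝ => (U (Set.Icc 0 x)).toReal / (x ^ rho * L x))
      (𝓝[>] 0) (𝓝 1))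
    (hUh : Tendsto (fun x : ℝ => (Uh (Set.Icc 0 x)).toReal / (x ^ rho * Lh x))
      (𝓝[>] 0) (𝓝 1))
    (Psi Psih : ℝ → ℝ)
    (hPsi : ∀ x : ℝ, Psi x = C * ∫ y in Set.Icc 0 x, Real.exp ((alpha - beta) * y) ∂U)
    (hPsih : ∀ x : ℝ,
      Psih x = Ch * ∫ y in Set.Icc 0 x, Real.exp ((alphah - betah) * y) ∂Uh)
    (Q : EReal) (hQ0 : 0 ≤ Q)
    (hQ : Tendsto (fun x : ℝ => ((L x / Lh x : ℝ) : EReal)) (𝓝[>] 0) (𝓝 Q)) :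
    Tendsto (fun x : ℝ => (((Psi x - Psih x) / (x ^ rho * Lh x) : ℝ) : EReal))
      (𝓝[>] 0) (𝓝 ((C : EReal) * Q - (Ch : EReal))) :=
  Psi_diff_tendsto_of_ratio_limit_general rho C Ch hC alpha beta alphah betah U Uh L Lh hU hUh Psi
    Psih hPsi hPsih Q hQ
end

section
/- For ρ, ρ̂ ∈ (0,1) and γ ∈ (1,2], set A(γ) := (sin(πρ)/π) ∫₀^{γ−1} (γ−1−u)^{ρ̂} / ((1+u) u^{ρ}) du and Â(γ) := (sin(πρ̂)/π) ∫₀^{γ−1} (γ−1−u)^{ρ̂} / ((1+u) u^{ρ̂}) du. If 0 < ρ̂ < ρ ≤ 1/2, then the function γ ↦ A(γ) − Â(γ) is nondecreasing on (1,2]. -/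
open Filter Topology MeasureTheory Set Real

/-- Integrability of the basic integrand. -/
lemma aux_intervalIntegrable (t p q : ℝ) (ht : 0 ≤ t) (hp : 0 < p) (hp1 : p < 1)
    (hq : 0 ≤ q) :
    IntervalIntegrable (fun u : ℝ => (t - u) ^ q / ((1 + u) * u ^ p)) volume 0 t := by
  have h1 : IntervalIntegrable (fun u : ℝ => u ^ (-p)) volume 0 t :=
    intervalIntegral.intervalIntegrable_rpow' (by linarith)
  have hc : ContinuousOn (fun u : ℝ => (t - u) ^ q * (1 + u)⁻¹) (Set.uIcc 0 t) := by
    apply ContinuousOn.mul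
    · exact ((continuous_const.sub continuous_id).rpow_const (fun x => Or.inr hq)).continuousOn
    · apply ContinuousOn.inv₀ (by fun_prop)
      intro x hx
      rw [Set.uIcc_of_le ht] at hx
      have : (0:ℝ) ≤ x := hx.1
      nlinarith
  have h2 := h1.mul_continuousOn hc
  rw [intervalIntegrable_iff] at h2 ⊢
  apply h2.congr_fun _ measurableSet_uIoc
  intro u hu
  rw [Set.uIoc_of_le ht] at hu
  have hu0 : 0 < u := hu.1
  simp only
  rw [Real.rpow_neg hu0.le, div_eq_mul_inv, mul_inv]
  ring

/-- monotonicity assertion in the last part of Lemma 4.2 of the paper.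
For `0 < ρ̂ < ρ ≤ 1/2`, the function
`γ ↦ A(γ) − Â(γ)` is nondecreasing on `(1,2]`, where
`A(γ) = (sin(πρ)/π) ∫₀^{γ−1} (γ−1−u)^ρ̂/((1+u)u^ρ) du` and
`Â(γ) = (sin(πρ̂)/π) ∫₀^{γ−1} (γ−1−u)^ρ̂/((1+u)u^ρ̂) du`. -/
theorem arcsine_integral_diff_monotoneOn
    (rho rhoh : ℝ) (hrhoh : 0 < rhoh) (hlt : rhoh < rho) (hrho : rho ≤ 1 / 2) :
    MonotoneOn
      (fun gamma : ℝ =>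
        (Real.sin (Real.pi * rho) / Real.pi) *
            (∫ u in (0:ℝ)..(gamma - 1), (gamma - 1 - u) ^ rhoh / ((1 + u) * u ^ rho)) -
          (Real.sin (Real.pi * rhoh) / Real.pi) *
            (∫ u in (0:ℝ)..(gamma - 1), (gamma - 1 - u) ^ rhoh / ((1 + u) * u ^ rhoh)))
      (Set.Ioc (1:ℝ) 2) := by
  have hpi : (0:ℝ) < Real.pi := Real.pi_pos
  have hrho0 : 0 < rho := lt_trans hrhoh hlt
  have hrho1 : rho < 1 := by linarith
  set c1 := Real.sin (Real.pi * rho) / Real.pi with hc1def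
  set c2 := Real.sin (Real.pi * rhoh) / Real.pi with hc2def
  have hs2pos : 0 < Real.sin (Real.pi * rhoh) :=
    Real.sin_pos_of_pos_of_lt_pi (by positivity) (by nlinarith)
  have hsins : Real.sin (Real.pi * rhoh) ≤ Real.sin (Real.pi * rho) := by
    apply le_of_lt
    apply Real.strictMonoOn_sin ?_ ?_ (by nlinarith)
    · constructor <;> nlinarith
    · constructor <;> nlinarith
  have hs1pos : 0 < Real.sin (Real.pi * rho) :=
    Real.sin_pos_of_pos_of_lt_pi (by positivity) (by nlinarith)
  have hc2pos : 0 < c2 := by positivity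
  have hc1pos : 0 < c1 := by positivity
  have hc12 : c2 ≤ c1 := by rw [hc1def, hc2def]; gcongr
  -- combined integrand
  set G : ℝ → ℝ := fun u => c1 / ((1 + u) * u ^ rho) - c2 / ((1 + u) * u ^ rhoh) with hGdef
  set K : ℝ → ℝ → ℝ := fun t u =>
    c1 * ((t - u) ^ rhoh / ((1 + u) * u ^ rho)) -
      c2 * ((t - u) ^ rhoh / ((1 + u) * u ^ rhoh)) with hKdef
  have hKeq : ∀ t u : ℝ, K t u = (t - u) ^ rhoh * G u := by
    intro t u; simp only [hKdef, hGdef]; ring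
  have hG : ∀ u : ℝ, 0 ≤ u → u ≤ 1 → 0 ≤ G u := by
    intro u hu0 hu1
    rcases eq_or_lt_of_le hu0 with h | hu0
    · simp only [hGdef, ← h, Real.zero_rpow (ne_of_gt hrho0),
        Real.zero_rpow (ne_of_gt hrhoh), mul_zero, div_zero, sub_zero, le_refl]
    · have hd1 : 0 < (1 + u) * u ^ rho := by positivity
      have hd2 : (1 + u) * u ^ rho ≤ (1 + u) * u ^ rhoh := by
        apply mul_le_mul_of_nonneg_left
          (Real.rpow_le_rpow_of_exponent_ge hu0 hu1 (le_of_lt hlt)) (by linarith)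
      have := div_le_div₀ (le_of_lt hc1pos) hc12 hd1 hd2
      simp only [hGdef]
      linarith
  have hKmono : ∀ t s u : ℝ, 0 ≤ u → u ≤ 1 → u ≤ t → t ≤ s → K t u ≤ K s u := by
    intro t s u hu0 hu1 hut hts
    rw [hKeq, hKeq]
    apply mul_le_mul_of_nonneg_right _ (hG u hu0 hu1)
    exact Real.rpow_le_rpow (by linarith) (by linarith) (le_of_lt hrhoh)
  have hKnonneg : ∀ t u : ℝ, 0 ≤ u → u ≤ 1 → u ≤ t → 0 ≤ K t u := by
    intro t u hu0 hu1 hut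
    rw [hKeq]
    exact mul_nonneg (Real.rpow_nonneg (by linarith) _) (hG u hu0 hu1)
  -- rewrite the target values as integrals of K
  intro a ha b hb hab
  set x := a - 1 with hxdef
  set y := b - 1 with hydef
  have hx0 : 0 < x := by simp only [hxdef]; linarith [ha.1]
  have hy1 : y ≤ 1 := by simp only [hydef]; linarith [hb.2]
  have hxy : x ≤ y := by simp only [hxdef, hydef]; linarith
  have hx1 : x ≤ 1 := le_trans hxy hy1
  have hy0 : 0 < y := lt_of_lt_of_le hx0 hxy
  have Ix1 := aux_intervalIntegrable x rho rhoh (le_of_lt hx0) hrho0 hrho1 (le_of_lt hrhoh)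
  have Ix2 := aux_intervalIntegrable x rhoh rhoh (le_of_lt hx0) hrhoh (by linarith) (le_of_lt hrhoh)
  have Iy1 := aux_intervalIntegrable y rho rhoh (le_of_lt hy0) hrho0 hrho1 (le_of_lt hrhoh)
  have Iy2 := aux_intervalIntegrable y rhoh rhoh (le_of_lt hy0) hrhoh (by linarith) (le_of_lt hrhoh)
  have hKx : IntervalIntegrable (K x) volume 0 x := (Ix1.const_mul c1).sub (Ix2.const_mul c2)
  have hKy : IntervalIntegrable (K y) volume 0 y := (Iy1.const_mul c1).sub (Iy2.const_mul c2)
  have hsub : Set.uIcc 0 x ⊆ Set.uIcc 0 y := by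
    rw [Set.uIcc_of_le (le_of_lt hx0), Set.uIcc_of_le (le_of_lt hy0)]
    exact Set.Icc_subset_Icc le_rfl hxy
  have hsub2 : Set.uIcc x y ⊆ Set.uIcc 0 y := by
    rw [Set.uIcc_of_le hxy, Set.uIcc_of_le (le_of_lt hy0)]
    exact Set.Icc_subset_Icc (le_of_lt hx0) le_rfl
  have hKy0x : IntervalIntegrable (K y) volume 0 x := hKy.mono_set hsub
  have hKyxy : IntervalIntegrable (K y) volume x y := hKy.mono_set hsub2
  have hval : ∀ (t : ℝ),
      IntervalIntegrable (fun u : ℝ => (t - u) ^ rhoh / ((1 + u) * u ^ rho)) volume 0 t →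
      IntervalIntegrable (fun u : ℝ => (t - u) ^ rhoh / ((1 + u) * u ^ rhoh)) volume 0 t →
      c1 * (∫ u in (0:ℝ)..t, (t - u) ^ rhoh / ((1 + u) * u ^ rho)) -
        c2 * (∫ u in (0:ℝ)..t, (t - u) ^ rhoh / ((1 + u) * u ^ rhoh)) =
      ∫ u in (0:ℝ)..t, K t u := by
    intro t h1 h2
    rw [← intervalIntegral.integral_const_mul, ← intervalIntegral.integral_const_mul,
      ← intervalIntegral.integral_sub (h1.const_mul c1) (h2.const_mul c2)]
  simp only
  rw [← hxdef, ← hydef, hval x Ix1 Ix2, hval y Iy1 Iy2]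
  calc ∫ u in (0:ℝ)..x, K x u
      ≤ ∫ u in (0:ℝ)..x, K y u := by
        apply intervalIntegral.integral_mono_on (le_of_lt hx0) hKx hKy0x
        intro u hu
        exact hKmono x y u hu.1 (le_trans hu.2 hx1) hu.2 hxy
    _ ≤ (∫ u in (0:ℝ)..x, K y u) + ∫ u in x..y, K y u := by
        have : 0 ≤ ∫ u in x..y, K y u := by
          apply intervalIntegral.integral_nonneg hxy
          intro u hu
          exact hKnonneg y u (le_trans (le_of_lt hx0) hu.1) (le_trans hu.2 hy1) hu.2
        linarith
    _ = ∫ u in (0:ℝ)..y, K y u :=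
        intervalIntegral.integral_add_adjacent_intervals hKy0x hKyxy
end

section
/- Let ρ, ρ̂ ∈ (0,1), γ > 1, Ĉ > 0, let L̂ be slowly varying at 0⁺, and let ψ̂ : (0,∞) → (0,∞) be nondecreasing with ψ̂(x)/(Ĉ x^{ρ̂} L̂(x)) → 1 as x → 0⁺ (set ψ̂(0) := 0). Let μ denote the Dynkin–Lamperti generalized arcsine law of index ρ on (0,∞), i.e. the probability measure μ(dy) = (sin(ρπ)/π) · y^{−ρ}(1+y)^{−1} dy. Let (μ_t)_{t>0} be a family of Borel probability measures on [0,∞) converging weakly to μ as t → 0⁺. Then lim_{t→0⁺} (1/(Ĉ t^{ρ̂} L̂(t))) ∫_{[0, γ−1)} ψ̂( t (γ−1−y) ) μ_t(dy) = ∫_{[0, γ−1)} (γ−1−y)^{ρ̂} μ(dy). -/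
/-!
Put `a = γ - 1` and `R(t) = Ĉ t^ρ̂ L̂(t)`. Regular variation gives `ψ̂(tc)/R(t) → c^ρ̂` for every
`c ∈ [0, a]`; since `c ↦ ψ̂(tc)/R(t)` is nondecreasing and the limit is continuous, the
convergence is uniform on `[0, a]` (Pólya). So the normalised integral differs by `o(1)` from
`∫_{[0,a)} (a - y)^ρ̂ μ_t(dy)`, which converges to the same integral against `μ` by weak
convergence: on `[0, ∞)` the integrand `1_{[0,a)}(y) (a - y)^ρ̂` agrees with a bounded continuous
function, as it vanishes continuously at `y = a`.
-/

open Filter Topology MeasureTheory Set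

theorem SlowlyVaryingAtZero.tendsto_comp_mul_div {L ψ : ℝ → ℝ} {C r c : ℝ}
    (hL : SlowlyVaryingAtZero L) (hLpos : ∀ x, 0 < x → 0 < L x) (hC : C ≠ 0)
    (hψ : Tendsto (fun x => ψ x / (C * x ^ r * L x)) (𝓝[>] 0) (𝓝 1)) (hc : 0 < c) :
    Tendsto (fun t => ψ (t * c) / (C * t ^ r * L t)) (𝓝[>] 0) (𝓝 (c ^ r)) := by
  have hscale : Tendsto (fun t => t * c) (𝓝[>] 0) (𝓝[>] 0) := by
    simpa only [mul_comm _ c] using tendsto_comap.mono_left (comap_mulLeft_nhdsGT_zero hc).ge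
  have hlim := (hψ.comp hscale).mul ((hL c hc).const_mul (c ^ r))
  rw [one_mul, mul_one] at hlim
  refine hlim.congr' ?_
  filter_upwards [self_mem_nhdsWithin] with t (ht : 0 < t)
  have hLt := (hLpos t ht).ne'
  have hLct := (hLpos (c * t) (mul_pos hc ht)).ne'
  have htr := (Real.rpow_pos_of_pos ht r).ne'
  have hcr := (Real.rpow_pos_of_pos hc r).ne'
  simp only [Function.comp_apply]
  rw [Real.mul_rpow ht.le hc.le, mul_comm t c]
  field_simp

theorem exists_Icc_grid_bracket {a b h x : ℝ} (hh : 0 < h) (hx : x ∈ Icc a b) :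
    ∃ k ≤ ⌊(b - a) / h⌋₊, min b (a + k * h) ≤ x ∧ x ≤ min b (a + (k + 1) * h) := by
  have hxa : 0 ≤ (x - a) / h := div_nonneg (sub_nonneg.2 hx.1) hh.le
  refine ⟨⌊(x - a) / h⌋₊, Nat.floor_mono (by gcongr; exact hx.2), ?_, ?_⟩
  · refine min_le_of_right_le ?_
    have := Nat.floor_le hxa
    rw [le_div_iff₀ hh] at this
    linarith
  · refine le_min hx.2 ?_
    have := (Nat.lt_floor_add_one ((x - a) / h)).le
    rw [div_le_iff₀ hh] at this
    linarith

/-- Pólya's theorem. -/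
theorem tendstoUniformlyOn_Icc_of_monotoneOn {ι : Type*} {l : Filter ι} {F : ι → ℝ → ℝ}
    {g : ℝ → ℝ} {a b : ℝ} (hF : ∀ᶠ i in l, MonotoneOn (F i) (Icc a b))
    (hg : MonotoneOn g (Icc a b)) (hgc : ContinuousOn g (Icc a b))
    (hlim : ∀ x ∈ Icc a b, Tendsto (F · x) l (𝓝 (g x))) :
    TendstoUniformlyOn F g l (Icc a b) := by
  rw [Metric.tendstoUniformlyOn_iff]
  intro ε hε
  obtain ⟨δ, hδ, hgδ⟩ := Metric.uniformContinuousOn_iff.1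
    (isCompact_Icc.uniformContinuousOn_of_continuous hgc) (ε / 3) (by positivity)
  set p : ℕ → ℝ := fun k => min b (a + k * (δ / 2))
  set N := ⌊(b - a) / (δ / 2)⌋₊
  have hgrid : ∀ᶠ i in l, ∀ k ∈ Finset.range (N + 2),
      p k ∈ Icc a b → dist (F i (p k)) (g (p k)) < ε / 3 := by
    rw [Finset.eventually_all]
    intro k _
    by_cases hk : p k ∈ Icc a b
    · filter_upwards [Metric.tendsto_nhds.1 (hlim _ hk) (ε / 3) (by positivity)] with i hi
      exact fun _ => hi
    · exact Eventually.of_forall fun _ h => absurd h hk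
  filter_upwards [hF, hgrid] with i hFi hgi x hx
  obtain ⟨k, hkN, hlo, hhi⟩ := exists_Icc_grid_bracket (half_pos hδ) hx
  have hp : ∀ j, p j ∈ Icc a b := fun j =>
    ⟨le_min (hx.1.trans hx.2) (le_add_of_nonneg_right (by positivity)), min_le_left _ _⟩
  have hstep : dist (p (k + 1)) (p k) < δ := by
    rw [Real.dist_eq]
    calc |p (k + 1) - p k| ≤ max |b - b| |a + (k + 1 : ℕ) * (δ / 2) - (a + k * (δ / 2))| :=
          abs_min_sub_min_le_max _ _ _ _
      _ < δ := by
        push_cast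
        rw [sub_self, abs_zero, max_eq_right (abs_nonneg _),
          show a + ((k : ℝ) + 1) * (δ / 2) - (a + k * (δ / 2)) = δ / 2 by ring,
          abs_of_pos (half_pos hδ)]
        exact half_lt_self hδ
  have hlow := hgi k (Finset.mem_range.2 (by omega)) (hp k)
  have hupp := hgi (k + 1) (Finset.mem_range.2 (by omega)) (hp (k + 1))
  have hgap := hgδ _ (hp (k + 1)) _ (hp k) hstep
  have hF1 := hFi (hp k) hx hlo
  have hF2 := hFi hx (hp (k + 1)) (by simpa [p] using hhi)
  have hg1 := hg (hp k) hx hlo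
  have hg2 := hg hx (hp (k + 1)) (by simpa [p] using hhi)
  rw [Real.dist_eq, abs_lt] at hlow hupp hgap ⊢
  constructor <;> linarith [hlow.1, hlow.2, hupp.1, hupp.2, hgap.1, hgap.2]

theorem MonotoneOn.comp_mul_div {ψ : ℝ → ℝ} (hψ : MonotoneOn ψ (Ici 0)) {t d : ℝ}
    (ht : 0 ≤ t) (hd : 0 ≤ d) : MonotoneOn (fun c => ψ (t * c) / d) (Ici 0) :=
  fun _ hx _ hy hxy => div_le_div_of_nonneg_right (hψ (mul_nonneg ht hx) (mul_nonneg ht hy)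
    (mul_le_mul_of_nonneg_left hxy ht)) hd

theorem SlowlyVaryingAtZero.tendstoUniformlyOn_Icc {L ψ : ℝ → ℝ} {C r : ℝ}
    (hL : SlowlyVaryingAtZero L) (hLpos : ∀ x, 0 < x → 0 < L x) (hC : 0 < C) (hr : 0 < r)
    (hψ0 : ψ 0 = 0) (hψmono : MonotoneOn ψ (Ici 0))
    (hψ : Tendsto (fun x => ψ x / (C * x ^ r * L x)) (𝓝[>] 0) (𝓝 1)) (a : ℝ) :
    TendstoUniformlyOn (fun t c => ψ (t * c) / (C * t ^ r * L t)) (· ^ r) (𝓝[>] 0)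
      (Icc 0 a) := by
  refine tendstoUniformlyOn_Icc_of_monotoneOn ?_
    (fun x hx y _ hxy => Real.rpow_le_rpow hx.1 hxy hr.le)
    (Real.continuous_rpow_const hr.le).continuousOn fun c hc => ?_
  · filter_upwards [self_mem_nhdsWithin] with t (ht : 0 < t)
    have := hLpos t ht
    exact (hψmono.comp_mul_div ht.le (by positivity)).mono Icc_subset_Ici_self
  · rcases hc.1.eq_or_lt with rfl | hc
    · simp [hψ0, Real.zero_rpow hr.ne']
    · exact hL.tendsto_comp_mul_div hLpos hC.ne' hψ hc

theorem tendsto_setIntegral_of_tendstoUniformlyOn {α ι : Type*} [MeasurableSpace α]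
    {l : Filter ι} {μ : ι → Measure α} {F : ι → α → ℝ} {g : α → ℝ} {s : Set α} {L : ℝ}
    (hμ : ∀ᶠ i in l, IsProbabilityMeasure (μ i))
    (hF : ∀ᶠ i in l, IntegrableOn (F i) s (μ i)) (hg : ∀ᶠ i in l, IntegrableOn g s (μ i))
    (hFg : TendstoUniformlyOn F g l s) (hlim : Tendsto (fun i => ∫ x in s, g x ∂μ i) l (𝓝 L)) :
    Tendsto (fun i => ∫ x in s, F i x ∂μ i) l (𝓝 L) := by
  suffices hdiff : Tendsto (fun i => ∫ x in s, F i x ∂μ i - ∫ x in s, g x ∂μ i) l (𝓝 0) by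
    simpa using hdiff.add hlim
  refine Metric.tendsto_nhds.2 fun ε hε => ?_
  filter_upwards [hμ, hF, hg, Metric.tendstoUniformlyOn_iff.1 hFg (ε / 2) (half_pos hε)]
    with i _ hFi hgi hi
  rw [dist_zero_right, ← integral_sub hFi hgi]
  calc ‖∫ x in s, F i x - g x ∂μ i‖ ≤ ε / 2 * (μ i).real s :=
        norm_setIntegral_le_of_norm_le_const (measure_lt_top _ _) fun x hx => by
          rw [← dist_eq_norm, dist_comm]
          exact (hi x hx).le
    _ ≤ ε / 2 := mul_le_of_le_one_right (half_pos hε).le measureReal_le_one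
    _ < ε := half_lt_self hε

theorem exists_boundedContinuousFunction_integral_eq_setIntegral_Ico_rpow {a r : ℝ}
    (ha : 0 ≤ a) (hr : 0 < r) :
    ∃ G : BoundedContinuousFunction ℝ ℝ, ∀ m : Measure ℝ, m (Iio 0) = 0 →
      ∫ y, G y ∂m = ∫ y in Ico 0 a, (a - y) ^ r ∂m := by
  have hbase : ∀ y : ℝ, a - min (max y 0) a ∈ Icc 0 a := fun y =>
    ⟨sub_nonneg.2 (min_le_right _ _), sub_le_self _ (le_min (le_max_right _ _) ha)⟩
  refine ⟨.ofNormedAddCommGroup (fun y => (a - min (max y 0) a) ^ r)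
    ((Real.continuous_rpow_const hr.le).comp (by fun_prop)) (a ^ r) fun y => ?_, fun m hm => ?_⟩
  · rw [Real.norm_eq_abs, abs_of_nonneg (Real.rpow_nonneg (hbase y).1 _)]
    exact Real.rpow_le_rpow (hbase y).1 (hbase y).2 hr.le
  · rw [← integral_indicator measurableSet_Ico]
    refine integral_congr_ae ?_
    filter_upwards [ae_iff.2 (measure_mono_null (fun y (hy : ¬0 ≤ y) => not_le.1 hy) hm)]
      with y (hy : 0 ≤ y)
    rcases lt_or_ge y a with hya | hay
    · simp [indicator_of_mem (show y ∈ Ico 0 a from ⟨hy, hya⟩), max_eq_left hy, hya.le]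
    · simp [max_eq_left hy, hay, Real.zero_rpow hr.ne']

theorem dynkin_lamperti_energy_limit_general
    (rho rhoh : ℝ) (hrhoh : rhoh ∈ Set.Ioo (0:ℝ) 1)
    (gamma : ℝ) (hgamma : 1 < gamma)
    (Ch : ℝ) (hCh : 0 < Ch)
    (Lh : ℝ → ℝ) (hLhpos : ∀ x : ℝ, 0 < x → 0 < Lh x)
    (hLhsv : SlowlyVaryingAtZero Lh)
    (psih : ℝ → ℝ)
    (hpsih0 : psih 0 = 0)
    (hpsihmono : MonotoneOn psih (Set.Ici (0:ℝ)))
    (hpsih : Tendsto (fun x : ℝ => psih x / (Ch * x ^ rhoh * Lh x)) (𝓝[>] 0) (𝓝 1))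
    (ν : Measure ℝ)
    (hν : ν = (MeasureTheory.volume.restrict (Set.Ioi (0:ℝ))).withDensity
      (fun y : ℝ => ENNReal.ofReal
        ((Real.sin (rho * Real.pi) / Real.pi) * (y ^ (-rho) * (1 + y)⁻¹))))
    (μ : ℝ → Measure ℝ)
    (hμprob : ∀ t : ℝ, 0 < t → IsProbabilityMeasure (μ t))
    (hμ0 : ∀ t : ℝ, 0 < t → μ t (Set.Iio 0) = 0)
    (hweak : ∀ f : BoundedContinuousFunction ℝ ℝ,
      Tendsto (fun t : ℝ => ∫ y, f y ∂(μ t)) (𝓝[>] 0) (𝓝 (∫ y, f y ∂ν))) :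
    Tendsto
      (fun t : ℝ =>
        (1 / (Ch * t ^ rhoh * Lh t)) *
          ∫ y in Set.Ico 0 (gamma - 1), psih (t * (gamma - 1 - y)) ∂(μ t))
      (𝓝[>] 0)
      (𝓝 (∫ y in Set.Ico 0 (gamma - 1), (gamma - 1 - y) ^ rhoh ∂ν)) := by
  set a := gamma - 1
  set R : ℝ → ℝ := fun t => Ch * t ^ rhoh * Lh t
  have hflip : MapsTo (a - ·) (Icc 0 a) (Icc 0 a) := fun y hy =>
    ⟨sub_nonneg.2 hy.2, sub_le_self _ hy.1⟩
  have hunif : TendstoUniformlyOn (fun t y => psih (t * (a - y)) / R t)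
      (fun y => (a - y) ^ rhoh) (𝓝[>] 0) (Ico 0 a) :=
    ((hLhsv.tendstoUniformlyOn_Icc hLhpos hCh hrhoh.1 hpsih0 hpsihmono hpsih a).comp
      (a - ·)).mono fun _ hy => hflip (Ico_subset_Icc_self hy)
  have hν0 : ν (Iio 0) = 0 := by
    simp [hν, withDensity_apply _ measurableSet_Iio, Measure.restrict_restrict measurableSet_Iio,
      Iio_inter_Ioi]
  obtain ⟨G, hG⟩ := exists_boundedContinuousFunction_integral_eq_setIntegral_Ico_rpow
    (sub_pos.2 hgamma).le hrhoh.1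
  have hlim : Tendsto (fun t => ∫ y in Ico 0 a, (a - y) ^ rhoh ∂μ t) (𝓝[>] 0)
      (𝓝 (∫ y in Ico 0 a, (a - y) ^ rhoh ∂ν)) := by
    rw [← hG ν hν0]
    refine (hweak G).congr' ?_
    filter_upwards [self_mem_nhdsWithin] with t ht using hG _ (hμ0 t ht)
  have hprob : ∀ᶠ t in 𝓝[>] 0, IsProbabilityMeasure (μ t) :=
    eventually_nhdsWithin_of_forall hμprob
  refine (tendsto_setIntegral_of_tendstoUniformlyOn hprob ?_ ?_ hunif hlim).congr' ?_
  · filter_upwards [self_mem_nhdsWithin, hprob] with t (ht : 0 < t) _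
    have hF := hpsihmono.comp_mul_div (d := R t) ht.le (by have := hLhpos t ht; positivity)
    refine (AntitoneOn.integrableOn_isCompact isCompact_Icc ?_).mono_set Ico_subset_Icc_self
    exact fun x hx y hy hxy => hF (hflip hy).1 (hflip hx).1 (sub_le_sub_left hxy a)
  · filter_upwards [hprob] with t _
    refine (AntitoneOn.integrableOn_isCompact isCompact_Icc ?_).mono_set Ico_subset_Icc_self
    exact fun x hx y hy hxy => Real.rpow_le_rpow (hflip hy).1 (sub_le_sub_left hxy a) hrhoh.1.le
  · filter_upwards with t
    rw [integral_div, one_div, div_eq_inv_mul]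

/-- analytic core of Lemma 4.2 of the paper. Let `ψ̂` be nondecreasing,
regularly varying at `0⁺` with index `ρ̂` (`ψ̂(x) ∼ Ĉ x^ρ̂ L̂(x)`), let `μ` be the
Dynkin–Lamperti generalized arcsine law of index `ρ`, i.e.
`μ(dy) = (sin(ρπ)/π) y^{−ρ}(1+y)^{−1} dy` on `(0,∞)`, and let `(μ_t)` be Borel
probability measures on `[0,∞)` converging weakly to `μ` as `t → 0⁺`. Then
`(1/(Ĉ t^ρ̂ L̂(t))) ∫_{[0,γ−1)} ψ̂(t(γ−1−y)) μ_t(dy) → ∫_{[0,γ−1)} (γ−1−y)^ρ̂ μ(dy)`. -/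
theorem dynkin_lamperti_energy_limit
    (rho rhoh : ℝ) (hrho : rho ∈ Set.Ioo (0:ℝ) 1) (hrhoh : rhoh ∈ Set.Ioo (0:ℝ) 1)
    (gamma : ℝ) (hgamma : 1 < gamma)
    (Ch : ℝ) (hCh : 0 < Ch)
    (Lh : ℝ → ℝ) (hLhpos : ∀ x : ℝ, 0 < x → 0 < Lh x)
    (hLhsv : SlowlyVaryingAtZero Lh)
    (psih : ℝ → ℝ)
    (hpsih0 : psih 0 = 0)
    (hpsihpos : ∀ x : ℝ, 0 < x → 0 < psih x)
    (hpsihmono : MonotoneOn psih (Set.Ici (0:ℝ)))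
    (hpsih : Tendsto (fun x : ℝ => psih x / (Ch * x ^ rhoh * Lh x)) (𝓝[>] 0) (𝓝 1))
    (ν : Measure ℝ)
    (hν : ν = (MeasureTheory.volume.restrict (Set.Ioi (0:ℝ))).withDensity
      (fun y : ℝ => ENNReal.ofReal
        ((Real.sin (rho * Real.pi) / Real.pi) * (y ^ (-rho) * (1 + y)⁻¹))))
    (μ : ℝ → Measure ℝ)
    (hμprob : ∀ t : ℝ, 0 < t → IsProbabilityMeasure (μ t))
    (hμ0 : ∀ t : ℝ, 0 < t → μ t (Set.Iio 0) = 0)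
    (hweak : ∀ f : BoundedContinuousFunction ℝ ℝ,
      Tendsto (fun t : ℝ => ∫ y, f y ∂(μ t)) (𝓝[>] 0) (𝓝 (∫ y, f y ∂ν))) :
    Tendsto
      (fun t : ℝ =>
        (1 / (Ch * t ^ rhoh * Lh t)) *
          ∫ y in Set.Ico 0 (gamma - 1), psih (t * (gamma - 1 - y)) ∂(μ t))
      (𝓝[>] 0)
      (𝓝 (∫ y in Set.Ico 0 (gamma - 1), (gamma - 1 - y) ^ rhoh ∂ν)) :=
  dynkin_lamperti_energy_limit_general rho rhoh hrhoh gamma hgamma Ch hCh Lh hLhpos hLhsv psih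
    hpsih0 hpsihmono hpsih ν hν μ hμprob hμ0 hweak
end
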